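/- If ℬ is a nonempty collection of 2-element subsets of a finite set E satisfying the base exchange axiom, then there exist a set E₀ ⊆ E and a partition {E₁, ..., E_k} of E \ E₀ such that ℬ = {{e₁, e₂} : e₁ ∈ E_i, e₂ ∈ E_j, 0 < i < j}. -/
import Mathlib


/-- The base exchange axiom for a collection of finite subsets. -/
def ExchangeAxiom {α : Type*} [DecidableEq α] (ℬ : Finset (Finset α)) : Prop :=
  ∀ B ∈ ℬ, ∀ B' ∈ ℬ, ∀ e ∈ B \ B', ∃ f ∈ B' \ B, (B.erase e) ∪ {f} ∈ ℬ

/-- Structure of rank-2 matroids: the bases are exactly the pairs of elements taken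
from two distinct blocks of a partition of `E \ E₀`. -/
theorem rank_two_structure {α : Type*} [DecidableEq α] (E : Finset α)
    (ℬ : Finset (Finset α)) (hne : ℬ.Nonempty)
    (hsub : ∀ B ∈ ℬ, B ⊆ E) (hcard : ∀ B ∈ ℬ, B.card = 2)
    (hex : ExchangeAxiom ℬ) :
    ∃ E₀ ⊆ E, ∃ P : Finset (Finset α),
      (∀ p ∈ P, p.Nonempty) ∧
      (∀ p ∈ P, ∀ q ∈ P, p ≠ q → Disjoint p q) ∧
      (P.sup id = E \ E₀) ∧
      (∀ B : Finset α, B ∈ ℬ ↔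
        ∃ p ∈ P, ∃ q ∈ P, p ≠ q ∧ ∃ e₁ ∈ p, ∃ e₂ ∈ q, B = {e₁, e₂}) := by
  classical
  set S : Finset α := ℬ.sup id with hSdef
  have hSE : S ⊆ E := Finset.sup_le fun B hB => hsub B hB
  have hBS : ∀ B ∈ ℬ, B ⊆ S := fun B hB => Finset.le_sup (f := id) hB
  have hmemS : ∀ x, x ∈ S ↔ ∃ B ∈ ℬ, x ∈ B := by
    intro x; simp [hSdef, Finset.mem_sup]
  -- every base is a pair
  have hpair : ∀ B ∈ ℬ, ∃ a b, a ≠ b ∧ B = {a, b} := by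
    intro B hB
    obtain ⟨a, b, hab, rfl⟩ := Finset.card_eq_two.mp (hcard B hB)
    exact ⟨a, b, hab, rfl⟩
  -- key claim: any x ∈ S not in a base B is joined to some element of B
  have claim : ∀ B ∈ ℬ, ∀ x ∈ S, x ∉ B → ∃ c ∈ B, ({x, c} : Finset α) ∈ ℬ := by
    intro B hB x hxS hxB
    obtain ⟨B', hB', hxB'⟩ := (hmemS x).mp hxS
    obtain ⟨a, b, hab, rfl⟩ := hpair B' hB'
    -- wlog x = a
    rcases Finset.mem_insert.mp hxB' with rfl | hxb
    · -- x = a, partner is b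
      by_cases hbB : b ∈ B
      · exact ⟨b, hbB, hB'⟩
      · have hbdiff : b ∈ ({x, b} : Finset α) \ B := by
          simp [hbB]
        obtain ⟨f, hf, hfB⟩ := hex _ hB' B hB b hbdiff
        rcases Finset.mem_sdiff.mp hf with ⟨hfB', hfnot⟩
        have hfx : f ≠ x := by rintro rfl; exact hfnot (by simp)
        refine ⟨f, hfB', ?_⟩
        have : ({x, b} : Finset α).erase b ∪ {f} = {x, f} := by
          rw [Finset.pair_comm x b, Finset.erase_insert (by simp [Ne.symm hab])]
          ext w; simp [or_comm]
        rwa [this] at hfB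
    · -- x = b
      have hxb' : x = b := Finset.mem_singleton.mp hxb
      subst hxb'
      by_cases haB : a ∈ B
      · refine ⟨a, haB, ?_⟩
        rw [Finset.pair_comm x a]; exact hB'
      · have hadiff : a ∈ ({a, x} : Finset α) \ B := by simp [haB]
        obtain ⟨f, hf, hfB⟩ := hex _ hB' B hB a hadiff
        rcases Finset.mem_sdiff.mp hf with ⟨hfB', hfnot⟩
        have hfx : f ≠ x := by rintro rfl; exact hfnot (by simp)
        refine ⟨f, hfB', ?_⟩
        have : ({a, x} : Finset α).erase a ∪ {f} = {x, f} := by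
          rw [Finset.erase_insert (by simp [hab])]
          ext w; simp [or_comm]
        rwa [this] at hfB
  -- the parallel relation
  set R : α → α → Prop := fun x y => x = y ∨ ({x, y} : Finset α) ∉ ℬ with hRdef
  have hRrefl : ∀ x, R x x := fun x => Or.inl rfl
  have hRsymm : ∀ x y, R x y → R y x := by
    intro x y h
    rcases h with rfl | h
    · exact Or.inl rfl
    · right; rwa [Finset.pair_comm]
  have hRtrans : ∀ x y z, x ∈ S → y ∈ S → z ∈ S → R x y → R y z → R x z := by
    intro x y z hxS hyS hzS hxy hyz
    rcases hxy with h | hxy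
    · subst h; exact hyz
    rcases hyz with h | hyz
    · subst h; exact Or.inr hxy
    by_cases hxz : x = z
    · exact Or.inl hxz
    right
    intro hB
    have hyx : y ≠ x := fun h => hyz (by rw [h]; exact hB)
    have hyz' : y ≠ z := fun h => hxy (by rw [h]; exact hB)
    have hynot : y ∉ ({x, z} : Finset α) := by simp [hyx, hyz']
    obtain ⟨c, hc, hcB⟩ := claim _ hB y hyS hynot
    rcases Finset.mem_insert.mp hc with rfl | hc
    · exact hxy (by rwa [Finset.pair_comm] at hcB)
    · rw [Finset.mem_singleton.mp hc] at hcB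
      exact hyz hcB
  -- classes
  set C : α → Finset α := fun x => S.filter (fun y => R x y) with hCdef
  have hmemC : ∀ x y, y ∈ C x ↔ y ∈ S ∧ R x y := by
    intro x y; simp [hCdef]
  have hselfC : ∀ x ∈ S, x ∈ C x := fun x hx => (hmemC x x).mpr ⟨hx, hRrefl x⟩
  have hCeq : ∀ x y, x ∈ S → y ∈ S → R x y → C x = C y := by
    intro x y hx hy hxy
    ext w
    rw [hmemC, hmemC]
    constructor
    · rintro ⟨hw, hxw⟩; exact ⟨hw, hRtrans y x w hy hx hw (hRsymm x y hxy) hxw⟩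
    · rintro ⟨hw, hyw⟩; exact ⟨hw, hRtrans x y w hx hy hw hxy hyw⟩
  set P : Finset (Finset α) := S.image C with hPdef
  refine ⟨E \ S, Finset.sdiff_subset, P, ?_, ?_, ?_, ?_⟩
  · -- nonempty
    intro p hp
    obtain ⟨x, hxS, rfl⟩ := Finset.mem_image.mp hp
    exact ⟨x, hselfC x hxS⟩
  · -- pairwise disjoint
    intro p hp q hq hpq
    obtain ⟨x, hxS, rfl⟩ := Finset.mem_image.mp hp
    obtain ⟨y, hyS, rfl⟩ := Finset.mem_image.mp hq
    rw [Finset.disjoint_left]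
    intro w hwx hwy
    obtain ⟨hwS, hxw⟩ := (hmemC x w).mp hwx
    obtain ⟨_, hyw⟩ := (hmemC y w).mp hwy
    exact hpq (hCeq x y hxS hyS
      (hRtrans x w y hxS hwS hyS hxw (hRsymm y w hyw)))
  · -- sup
    have : E \ (E \ S) = S := by
      rw [Finset.sdiff_sdiff_self_left, Finset.inter_eq_right.mpr hSE]
    rw [this]
    apply le_antisymm
    · apply Finset.sup_le
      intro p hp
      obtain ⟨x, hxS, rfl⟩ := Finset.mem_image.mp hp
      intro w hw
      exact ((hmemC x w).mp hw).1
    · intro x hx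
      exact Finset.le_sup (f := id) (Finset.mem_image_of_mem C hx) (hselfC x hx)
  · -- characterization
    intro B
    constructor
    · intro hB
      obtain ⟨a, b, hab, rfl⟩ := hpair B hB
      have haS : a ∈ S := hBS _ hB (by simp)
      have hbS : b ∈ S := hBS _ hB (by simp)
      have hnR : ¬ R a b := by
        rintro (rfl | h)
        · exact hab rfl
        · exact h hB
      refine ⟨C a, Finset.mem_image_of_mem C haS, C b, Finset.mem_image_of_mem C hbS,
        ?_, a, hselfC a haS, b, hselfC b hbS, rfl⟩
      intro h
      have : b ∈ C a := h ▸ hselfC b hbS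
      exact hnR ((hmemC a b).mp this).2
    · rintro ⟨p, hp, q, hq, hpq, e₁, he₁, e₂, he₂, rfl⟩
      obtain ⟨u, huS, rfl⟩ := Finset.mem_image.mp hp
      obtain ⟨v, hvS, rfl⟩ := Finset.mem_image.mp hq
      obtain ⟨he₁S, hue₁⟩ := (hmemC u e₁).mp he₁
      obtain ⟨he₂S, hve₂⟩ := (hmemC v e₂).mp he₂
      by_contra hnB
      have hR12 : R e₁ e₂ := by
        by_cases h : e₁ = e₂
        · exact Or.inl h
        · exact Or.inr hnB
      exact hpq (hCeq u v huS hvS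
        (hRtrans u e₂ v huS he₂S hvS
          (hRtrans u e₁ e₂ huS he₁S he₂S hue₁ hR12) (hRsymm v e₂ hve₂)))
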